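/- Let L be a self-adjoint operator on a real Hilbert space with inf spec(L) = μ an eigenvalue whose normalized eigenfunctions are strictly positive (componentwise, pointwise) functions, and suppose T is a known eigenfunction of L with eigenvalue 0 such that T > 0 pointwise. Then μ = 0 and the zero eigenvalue is non-degenerate with eigenspace spanned by T. (If μ < 0, the ground state S > 0 would satisfy ⟨S, T⟩ = 0, impossible since both are strictly positive.) -/

import Mathlib

/-!
Symmetry of `L` gives `μ ⟪S, T⟫ = ⟪L S, T⟫ = ⟪S, L T⟫ = 0`, and `⟪S, T⟫ ≠ 0` because `S` has a
sign on `(0,∞)` while `T > 0` there and `r dr` charges `(0,∞)`; hence `μ = 0`. For a zero mode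
`u`, the remainder `u - (⟪u, T⟫ / ⟪T, T⟫) • T` is again an eigenfunction at the bottom of the
spectrum and is orthogonal to `T`, so it cannot have a sign: it vanishes on `(0,∞)`.
-/

open Set MeasureTheory

/-- The measure `r dr` on `(0,∞)`. -/
noncomputable def rmeasure : Measure ℝ :=
  (volume.restrict (Set.Ioi (0:ℝ))).withDensity fun r => ENNReal.ofReal r

section L2Pairing

variable {α ι : Type*} [MeasurableSpace α] [Fintype ι] (m : Measure α)

noncomputable def l2Pairing (u v : α → ι → ℝ) : ℝ := ∫ x, ∑ k, u x k * v x k ∂m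

variable {m}

lemma integrable_sum_mul {u v : α → ι → ℝ} (hu : MemLp u 2 m) (hv : MemLp v 2 m) :
    Integrable (fun x => ∑ k, u x k * v x k) m :=
  integrable_finsetSum _ fun k _ => (hu.eval k).integrable_mul (hv.eval k)

lemma l2Pairing_smul_left (c : ℝ) (u v : α → ι → ℝ) :
    l2Pairing m (c • u) v = c * l2Pairing m u v := by
  simp only [l2Pairing, ← integral_const_mul, Finset.mul_sum, Pi.smul_apply, smul_eq_mul,
    mul_assoc]

lemma l2Pairing_neg_left (u v : α → ι → ℝ) : l2Pairing m (-u) v = -l2Pairing m u v := by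
  simpa using l2Pairing_smul_left (m := m) (-1) u v

lemma l2Pairing_zero_right (u : α → ι → ℝ) : l2Pairing m u 0 = 0 := by
  simp [l2Pairing]

lemma l2Pairing_sub_left {u w v : α → ι → ℝ} (hu : MemLp u 2 m) (hw : MemLp w 2 m)
    (hv : MemLp v 2 m) : l2Pairing m (u - w) v = l2Pairing m u v - l2Pairing m w v := by
  simp only [l2Pairing, ← integral_sub (integrable_sum_mul hu hv) (integrable_sum_mul hw hv),
    ← Finset.sum_sub_distrib, Pi.sub_apply, sub_mul]

lemma l2Pairing_sub_proj_left {u v : α → ι → ℝ} (hu : MemLp u 2 m) (hv : MemLp v 2 m)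
    (hvv : l2Pairing m v v ≠ 0) :
    l2Pairing m (u - (l2Pairing m u v / l2Pairing m v v) • v) v = 0 := by
  rw [l2Pairing_sub_left hu (hv.const_smul _) hv, l2Pairing_smul_left, div_mul_cancel₀ _ hvv,
    sub_self]

variable {s : Set α}

lemma l2Pairing_pos [Nonempty ι] (hs : ∀ᵐ x ∂m, x ∈ s) (hm : m ≠ 0) {u v : α → ι → ℝ}
    (hu : MemLp u 2 m) (hv : MemLp v 2 m) (hupos : ∀ x ∈ s, ∀ k, 0 < u x k)
    (hvpos : ∀ x ∈ s, ∀ k, 0 < v x k) : 0 < l2Pairing m u v := by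
  have hpos : ∀ x ∈ s, 0 < ∑ k, u x k * v x k := fun x hx =>
    Finset.sum_pos (fun k _ => mul_pos (hupos x hx k) (hvpos x hx k)) Finset.univ_nonempty
  have hpos_ae : ∀ᵐ x ∂m, 0 < ∑ k, u x k * v x k := hs.mono hpos
  rw [l2Pairing, integral_pos_iff_support_of_nonneg_ae (hpos_ae.mono fun x hx => hx.le)
    (integrable_sum_mul hu hv)]
  refine pos_iff_ne_zero.2 fun h0 => hm ?_
  rw [← ae_eq_bot, ← Filter.eventually_false_iff_eq_bot]
  filter_upwards [hpos_ae, measure_eq_zero_iff_ae_notMem.1 h0] with x hx hx0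
  exact hx0 hx.ne'

lemma eqOn_zero_of_l2Pairing_eq_zero [Nonempty ι] (hs : ∀ᵐ x ∂m, x ∈ s) (hm : m ≠ 0)
    {w v : α → ι → ℝ} (hw : MemLp w 2 m) (hv : MemLp v 2 m) (hvpos : ∀ x ∈ s, ∀ k, 0 < v x k)
    (hsign : (∃ x ∈ s, w x ≠ 0) → (∀ x ∈ s, ∀ k, 0 < w x k) ∨ (∀ x ∈ s, ∀ k, w x k < 0))
    (horth : l2Pairing m w v = 0) : ∀ x ∈ s, w x = 0 := by
  by_contra! hne
  rcases hsign hne with hwpos | hwneg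
  · exact (l2Pairing_pos hs hm hw hv hwpos hvpos).ne' horth
  · have := l2Pairing_pos hs hm hw.neg hv (fun x hx k => neg_pos.2 (hwneg x hx k)) hvpos
    rw [l2Pairing_neg_left, horth, neg_zero] at this
    exact this.false

end L2Pairing

lemma ae_rmeasure_mem_Ioi : ∀ᵐ r ∂rmeasure, r ∈ Ioi (0:ℝ) :=
  withDensity_absolutelyContinuous _ _ (ae_restrict_mem measurableSet_Ioi)

lemma rmeasure_ne_zero : rmeasure ≠ 0 := by
  intro h
  have hIoi : rmeasure (Ioi 0) = 0 := by rw [h]; rfl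
  rw [rmeasure, withDensity_apply _ measurableSet_Ioi, Measure.restrict_restrict measurableSet_Ioi,
    inter_self, setLIntegral_eq_zero_iff measurableSet_Ioi (by fun_prop)] at hIoi
  have hvol : volume (Ioi (0:ℝ)) = 0 := by
    refine measure_eq_zero_iff_ae_notMem.2 ?_
    filter_upwards [hIoi] with r hr hr0
    exact (ENNReal.ofReal_pos.2 hr0).ne' (hr hr0)
  simp at hvol

theorem stmt17 (L : (ℝ → Fin 4 → ℝ) →ₗ[ℝ] (ℝ → Fin 4 → ℝ)) (μ : ℝ)
    -- symmetry of L w.r.t. the L²(r dr) pairing: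
    (hsym : ∀ u v : ℝ → Fin 4 → ℝ,
      (∫ r, (∑ k, L u r k * v r k) ∂rmeasure) = ∫ r, (∑ k, u r k * L v r k) ∂rmeasure)
    -- μ is an eigenvalue (the infimum of the spectrum), witnessed by S:
    (S : ℝ → Fin 4 → ℝ) (hS : L S = μ • S)
    (hSne : ∃ r ∈ Ioi (0:ℝ), S r ≠ 0)
    (hSL2 : MemLp (fun r => S r) 2 rmeasure)
    -- eigenfunctions at μ are pointwise sign-definite (strictly positive up to sign):
    (hgs : ∀ u : ℝ → Fin 4 → ℝ, L u = μ • u → (∃ r ∈ Ioi (0:ℝ), u r ≠ 0) →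
      (∀ r ∈ Ioi (0:ℝ), ∀ k, 0 < u r k) ∨ (∀ r ∈ Ioi (0:ℝ), ∀ k, u r k < 0))
    -- T is a strictly positive eigenfunction with eigenvalue 0:
    (T : ℝ → Fin 4 → ℝ) (hT : L T = 0)
    (hTpos : ∀ r ∈ Ioi (0:ℝ), ∀ k, 0 < T r k)
    (hTL2 : MemLp (fun r => T r) 2 rmeasure) :
    μ = 0 ∧
    ∀ u : ℝ → Fin 4 → ℝ, MemLp (fun r => u r) 2 rmeasure → L u = 0 →
      ∃ c : ℝ, ∀ r ∈ Ioi (0:ℝ), u r = c • T r := by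
  have hTT : l2Pairing rmeasure T T ≠ 0 :=
    (l2Pairing_pos ae_rmeasure_mem_Ioi rmeasure_ne_zero hTL2 hTL2 hTpos hTpos).ne'
  have hvanish : ∀ w, MemLp w 2 rmeasure → L w = μ • w → l2Pairing rmeasure w T = 0 →
      ∀ r ∈ Ioi (0:ℝ), w r = 0 := fun w hw hLw =>
    eqOn_zero_of_l2Pairing_eq_zero ae_rmeasure_mem_Ioi rmeasure_ne_zero hw hTL2 hTpos (hgs w hLw)
  have hμ : μ = 0 := by
    have hST : l2Pairing rmeasure S T ≠ 0 := fun h => by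
      obtain ⟨r, hr, hSr⟩ := hSne
      exact hSr (hvanish S hSL2 hS h r hr)
    have h : l2Pairing rmeasure (L S) T = l2Pairing rmeasure S (L T) := hsym S T
    rw [hS, hT, l2Pairing_smul_left, l2Pairing_zero_right] at h
    exact (mul_eq_zero.1 h).resolve_right hST
  refine ⟨hμ, fun u hu hLu => ⟨l2Pairing rmeasure u T / l2Pairing rmeasure T T, fun r hr => ?_⟩⟩
  refine sub_eq_zero.1 (hvanish _ (hu.sub (hTL2.const_smul _)) ?_
    (l2Pairing_sub_proj_left hu hTL2 hTT) r hr)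
  rw [map_sub, map_smul, hLu, hT, hμ, smul_zero, sub_zero, zero_smul]
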